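/- arXiv:1707.03288 — 2 statements merged into one kernel-verified Lean document; each statement's English description precedes it below -/
import Mathlib

section
/- Let I be a dyadic interval, e ∈ ℤ, and n ∈ ℕ with n ≥ 1. Then the number of dyadic intervals J with |I| = 2^e |J| and n ≤ rdist(I,J) < n+1 is at most a constant times 2^{max(e,0)} (and at least of that order), where rdist(I,J) = diam(I∪J)/max(|I|,|J|). -/
/-- Lower endpoint of the dyadic interval `2^{-j}[k, k+1]`. -/
noncomputable def dyLow (j k : ℤ) : ℝ := (k : ℝ) * (2 : ℝ) ^ (-j)

/-- Upper endpoint of the dyadic interval `2^{-j}[k, k+1]`. -/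
noncomputable def dyHigh (j k : ℤ) : ℝ := ((k : ℝ) + 1) * (2 : ℝ) ^ (-j)

/-- Relative distance between the dyadic intervals `2^{-j}[k,k+1]` and `2^{-j'}[k',k'+1]`:
`rdist(I,J) = diam(I∪J)/max(|I|,|J|)`. -/
noncomputable def dyRdist (j k j' k' : ℤ) : ℝ :=
  (max (dyHigh j k) (dyHigh j' k') - min (dyLow j k) (dyLow j' k')) /
    max ((2 : ℝ) ^ (-j)) ((2 : ℝ) ^ (-j'))

/-
Rescale so that the smaller of `I`, `J` is a unit interval `[b, b + 1]` and the larger is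
`[a, a + M]` with `M = 2 ^ |e|`, all endpoints integers. Then `n ≤ rdist(I, J) < n + 1` says that
the hull of the two intervals has length in `[M n, M n + M)`, a condition on the offset `b - a`
alone which confines it to three blocks of `M` consecutive integers, the last block being
admissible in full. If `J` is the smaller interval, `k' ↦ b - a` is a translation, so there are
between `M` and `3 M` intervals `J`; if `J` is the larger one, only offsets `k - M k'` count, and
each block contains exactly one of them.
-/

open Set

-- the length of the smallest interval containing `[a, a + M] ∪ [b, b + 1]`
def hullLength (a M b : ℤ) : ℤ := max (a + M) (b + 1) - min a b

lemma hullLength_eq_zero_sub (a M b : ℤ) : hullLength a M b = hullLength 0 M (b - a) := by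
  unfold hullLength; omega

lemma dyRdist_comm (j k j' k' : ℤ) : dyRdist j k j' k' = dyRdist j' k' j k := by
  rw [dyRdist, dyRdist, max_comm, min_comm, max_comm (2 ^ (-j) : ℝ)]

lemma dyRdist_add_natCast (i a b : ℤ) (d : ℕ) :
    dyRdist i a (i + d) b = hullLength (2 ^ d * a) (2 ^ d) b / (2 : ℝ) ^ d := by
  have hscale : (2 : ℝ) ^ (-i) = 2 ^ d * 2 ^ (-(i + d)) := by
    rw [← zpow_natCast, ← zpow_add₀ two_ne_zero]; ring_nf
  have hc : (0 : ℝ) < 2 ^ (-(i + d)) := by positivity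
  simp only [dyRdist, dyHigh, dyLow, hullLength, hscale]
  generalize (2 : ℝ) ^ (-(i + d)) = c at hc ⊢
  have hmax : max (2 ^ d * c) c = 2 ^ d * c :=
    max_eq_left (le_mul_of_one_le_left hc.le (one_le_pow₀ one_le_two))
  push_cast
  rw [hmax, show ((a : ℝ) + 1) * (2 ^ d * c) = (2 ^ d * a + 2 ^ d) * c by ring,
    show (a : ℝ) * (2 ^ d * c) = (2 ^ d * a) * c by ring,
    ← max_mul_of_nonneg _ _ hc.le, ← min_mul_of_nonneg _ _ hc.le, ← sub_mul,
    mul_div_mul_right _ _ hc.ne']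

lemma le_div_lt_add_one_iff (D M : ℤ) (n : ℕ) (hM : 0 < M) :
    ((n : ℝ) ≤ D / M ∧ (D : ℝ) / M < n + 1) ↔ D ∈ Ico (M * n) (M * n + M) := by
  have hM' : (0 : ℝ) < M := by exact_mod_cast hM
  rw [le_div_iff₀ hM', div_lt_iff₀ hM', mem_Ico, ← Int.cast_le (R := ℝ), ← Int.cast_lt (R := ℝ)]
  push_cast
  constructor <;> rintro ⟨h₁, h₂⟩ <;> constructor <;> linarith

-- with `B = M n`: the offsets of `[t, t + 1]` from `[0, M]` at relative distance in `[n, n + 1)`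
def hullShell (M B : ℤ) : Set ℤ := {t | hullLength 0 M t ∈ Ico B (B + M)}

lemma Ico_subset_hullShell {M B : ℤ} (hB : M ≤ B) :
    Ico (B - 1) (B - 1 + M) ⊆ hullShell M B := by
  intro t ht
  simp only [hullShell, hullLength, mem_Ico, mem_ofPred_eq] at ht ⊢
  omega

lemma hullShell_subset {M B : ℤ} (hM : 1 ≤ M) :
    hullShell M B ⊆ Ico (1 - B) (1 - B + M) ∪ Ico 0 M ∪ Ico (B - 1) (B - 1 + M) := by
  intro t ht
  simp only [hullShell, hullLength, mem_Ico, mem_ofPred_eq, mem_union] at ht ⊢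
  omega

lemma preimage_hullShell_ncard_bounds {f : ℤ → ℤ} {M B : ℤ} {N : ℕ} (hM : 1 ≤ M) (hB : M ≤ B)
    (hf : ∀ c, (f ⁻¹' Ico c (c + M)).Finite ∧ (f ⁻¹' Ico c (c + M)).ncard = N) :
    (f ⁻¹' hullShell M B).Finite ∧ N ≤ (f ⁻¹' hullShell M B).ncard ∧
      (f ⁻¹' hullShell M B).ncard ≤ 3 * N := by
  obtain ⟨hfin₁, hcard₁⟩ := hf (1 - B)
  obtain ⟨hfin₂, hcard₂⟩ := hf 0
  obtain ⟨hfin₃, hcard₃⟩ := hf (B - 1)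
  rw [zero_add] at hfin₂ hcard₂
  have hcover := preimage_mono (f := f) (hullShell_subset (B := B) hM)
  rw [preimage_union, preimage_union] at hcover
  have hfinU := (hfin₁.union hfin₂).union hfin₃
  refine ⟨hfinU.subset hcover, ?_, ?_⟩
  · rw [← hcard₃]
    exact ncard_le_ncard (preimage_mono (Ico_subset_hullShell hB)) (hfinU.subset hcover)
  · calc (f ⁻¹' hullShell M B).ncard
        ≤ (f ⁻¹' Ico (1 - B) (1 - B + M) ∪ f ⁻¹' Ico 0 M ∪
            f ⁻¹' Ico (B - 1) (B - 1 + M)).ncard := ncard_le_ncard hcover hfinU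
      _ ≤ N + N + N := by
          refine (ncard_union_le _ _).trans (add_le_add ((ncard_union_le _ _).trans ?_) ?_)
          · rw [hcard₁, hcard₂]
          · rw [hcard₃]
      _ = 3 * N := by ring

lemma preimage_sub_const_Ico_ncard (a c M : ℤ) :
    ((· - a) ⁻¹' Ico c (c + M)).Finite ∧ ((· - a) ⁻¹' Ico c (c + M)).ncard = M.toNat := by
  rw [preimage_sub_const_Ico, ← Finset.coe_Ico, ncard_coe_finset, Int.card_Ico]
  exact ⟨Finset.finite_toSet _, by ring_nf⟩

lemma preimage_sub_mul_Ico_eq_singleton (k c M : ℤ) (hM : 0 < M) :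
    (k - M * ·) ⁻¹' Ico c (c + M) = {(k - c) / M} := by
  ext q
  rw [mem_preimage, mem_Ico, mem_singleton_iff, eq_comm, Int.ediv_eq_iff_of_pos hM]
  constructor <;> rintro ⟨h₁, h₂⟩ <;> constructor <;> linarith

lemma dyRdist_mem_Ico_iff (i a b : ℤ) (d n : ℕ) :
    ((n : ℝ) ≤ dyRdist i a (i + d) b ∧ dyRdist i a (i + d) b < n + 1) ↔
      b - 2 ^ d * a ∈ hullShell (2 ^ d) (2 ^ d * n) := by
  rw [dyRdist_add_natCast, show (2 : ℝ) ^ d = ((2 ^ d : ℤ) : ℝ) by push_cast; rfl,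
    le_div_lt_add_one_iff _ _ _ (by positivity), hullLength_eq_zero_sub]
  rfl

lemma setOf_dyRdist_finer_eq_preimage (j k : ℤ) (d n : ℕ) :
    {k' : ℤ | (n : ℝ) ≤ dyRdist j k (j + d) k' ∧ dyRdist j k (j + d) k' < n + 1} =
      (· - 2 ^ d * k) ⁻¹' hullShell (2 ^ d) (2 ^ d * n) := by
  ext k'
  exact dyRdist_mem_Ico_iff j k k' d n

lemma setOf_dyRdist_coarser_eq_preimage (j k : ℤ) (d n : ℕ) :
    {k' : ℤ | (n : ℝ) ≤ dyRdist j k (j + -d) k' ∧ dyRdist j k (j + -d) k' < n + 1} =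
      (k - 2 ^ d * ·) ⁻¹' hullShell (2 ^ d) (2 ^ d * n) := by
  ext k'
  have h : dyRdist j k (j + -d) k' = dyRdist (j + -d) k' (j + -d + d) k := by
    rw [neg_add_cancel_right, dyRdist_comm]
  rw [mem_ofPred_eq, h]
  exact dyRdist_mem_Ico_iff (j + -d) k' k d n

/-- For a dyadic interval `I` (of scale `j`), `e ∈ ℤ` and `n ≥ 1`, the number of dyadic
intervals `J` with `|I| = 2^e |J|` and `n ≤ rdist(I,J) < n+1` is comparable to
`2^{max(e,0)}`, with absolute constants. -/
theorem stmt3 :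
    ∃ C : ℝ, 1 ≤ C ∧ ∀ (j k e : ℤ) (n : ℕ), 1 ≤ n →
      ({k' : ℤ | (n : ℝ) ≤ dyRdist j k (j + e) k' ∧ dyRdist j k (j + e) k' < (n : ℝ) + 1}).Finite ∧
      (2 : ℝ) ^ (max e 0) / C ≤
        (({k' : ℤ | (n : ℝ) ≤ dyRdist j k (j + e) k' ∧
            dyRdist j k (j + e) k' < (n : ℝ) + 1}).ncard : ℝ) ∧
      (({k' : ℤ | (n : ℝ) ≤ dyRdist j k (j + e) k' ∧
            dyRdist j k (j + e) k' < (n : ℝ) + 1}).ncard : ℝ) ≤ C * (2 : ℝ) ^ (max e 0) := by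
  refine ⟨3, by norm_num, fun j k e n hn => ?_⟩
  set S := {k' : ℤ | (n : ℝ) ≤ dyRdist j k (j + e) k' ∧ dyRdist j k (j + e) k' < (n : ℝ) + 1}
    with hS
  have hM (d : ℕ) : (1 : ℤ) ≤ 2 ^ d := one_le_pow₀ one_le_two
  have hB (d : ℕ) : (2 : ℤ) ^ d ≤ 2 ^ d * n :=
    le_mul_of_one_le_right (by positivity) (by exact_mod_cast hn)
  obtain ⟨N, hN, hfin, hlow, hupp⟩ :
      ∃ N : ℕ, (2 : ℝ) ^ max e 0 = N ∧ S.Finite ∧ N ≤ S.ncard ∧ S.ncard ≤ 3 * N := by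
    rcases le_total 0 e with he | he
    · obtain ⟨d, rfl⟩ := Int.eq_ofNat_of_zero_le he
      refine ⟨2 ^ d, by simp, ?_⟩
      rw [hS, setOf_dyRdist_finer_eq_preimage]
      refine preimage_hullShell_ncard_bounds (hM d) (hB d) fun c => ?_
      simpa [Int.toNat_pow_of_nonneg] using preimage_sub_const_Ico_ncard (2 ^ d * k) c (2 ^ d)
    · obtain ⟨d, rfl⟩ := Int.exists_eq_neg_ofNat he
      refine ⟨1, by simp [he], ?_⟩
      rw [hS, setOf_dyRdist_coarser_eq_preimage]
      refine preimage_hullShell_ncard_bounds (hM d) (hB d) fun c => ?_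
      rw [preimage_sub_mul_Ico_eq_singleton _ _ _ (by positivity)]
      exact ⟨finite_singleton _, ncard_singleton _⟩
  refine ⟨hfin, ?_, ?_⟩ <;> rw [hN]
  · rw [div_le_iff₀ three_pos]; exact_mod_cast hlow.trans (by omega)
  · exact_mod_cast hupp
end

section
/- Let A : ℝ → ℝ be absolutely continuous with A' ∈ L^∞(ℝ) ∩ BMO(ℝ). Then for all x ≠ t, the kernel K_n(x,t) = (A(x) - A(t) - 2A(x - ¼(x-t)) + 2A(x - ¾(x-t)))^n / (x-t)^{n+1} satisfies |K_n(x,t)| ≲ 2^n ‖A'‖_{BMO}^n |x-t|^{-1}, with an absolute implicit constant. -/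
/-!
Writing `A x - A t` as `∫ₜˣ A'`, the numerator of `K_n(x,t)` is `∫_I A' - 2 ∫_J A'`, where `J` is the
middle half of the interval `I` between `t` and `x`. Since `|I| = 2 |J|`, subtracting the mean of `A'`
over `I` does not change this quantity, which is therefore at most `∫_I |A' - (A')_I| ≤ ‖A'‖_BMO |I|`.
Raising to the `n`-th power and dividing by `|x - t| ^ (n + 1)` gives the bound with `C = 1`.
-/

open MeasureTheory intervalIntegral

noncomputable def meanOscillation (g : ℝ → ℝ) (a b : ℝ) : ℝ :=
  (b - a)⁻¹ * ∫ s in a..b, |g s - (b - a)⁻¹ * ∫ z in a..b, g z|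

section MiddleHalf

variable {g : ℝ → ℝ} {a b : ℝ}

lemma meanOscillation_nonneg (hab : a ≤ b) : 0 ≤ meanOscillation g a b :=
  mul_nonneg (inv_nonneg.mpr (sub_nonneg.mpr hab))
    (integral_nonneg hab fun _ _ => abs_nonneg _)

lemma integral_abs_sub_average_eq (hab : a < b) :
    ∫ s in a..b, |g s - (b - a)⁻¹ * ∫ z in a..b, g z| = (b - a) * meanOscillation g a b := by
  rw [meanOscillation, ← mul_assoc, mul_inv_cancel₀ (sub_pos.mpr hab).ne', one_mul]

lemma abs_integral_sub_two_mul_integral_middle_le (hg : ∀ a b, IntervalIntegrable g volume a b)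
    (c : ℝ) (hab : a ≤ b) :
    |(∫ s in a..b, g s) - 2 * ∫ s in (a + (b - a) / 4)..(b - (b - a) / 4), g s|
      ≤ ∫ s in a..b, |g s - c| := by
  have haq : a ≤ a + (b - a) / 4 := by linarith
  have hqp : a + (b - a) / 4 ≤ b - (b - a) / 4 := by linarith
  have hpb : b - (b - a) / 4 ≤ b := by linarith
  set q := a + (b - a) / 4
  set p := b - (b - a) / 4
  have hgc : ∀ u v, IntervalIntegrable (fun s => g s - c) volume u v :=
    fun u v => (hg u v).sub intervalIntegrable_const
  have integral_sub_const : ∀ u v, ∫ s in u..v, (g s - c) = (∫ s in u..v, g s) - (v - u) * c :=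
    fun u v => by rw [integral_sub (hg u v) intervalIntegrable_const,
      intervalIntegral.integral_const, smul_eq_mul]
  -- `J = [q, p]` is half of `[a, b]`, so the constant `c` cancels.
  have hsplit : (∫ s in a..b, g s) - 2 * ∫ s in q..p, g s
      = (∫ s in a..q, (g s - c)) - (∫ s in q..p, (g s - c)) + ∫ s in p..b, (g s - c) := by
    rw [integral_sub_const, integral_sub_const, integral_sub_const,
      ← integral_add_adjacent_intervals (hg a q) (hg q b),
      ← integral_add_adjacent_intervals (hg q p) (hg p b)]
    ring
  have habs : ∀ {u v}, u ≤ v → |∫ s in u..v, (g s - c)| ≤ ∫ s in u..v, |g s - c| :=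
    fun huv => by simpa only [Real.norm_eq_abs] using
      norm_integral_le_integral_norm (f := fun s => g s - c) huv
  calc |(∫ s in a..b, g s) - 2 * ∫ s in q..p, g s|
      ≤ |∫ s in a..q, (g s - c)| + |∫ s in q..p, (g s - c)| + |∫ s in p..b, (g s - c)| := by
        rw [hsplit]
        exact (abs_add_le _ _).trans (by gcongr; exact abs_sub _ _)
    _ ≤ (∫ s in a..q, |g s - c|) + (∫ s in q..p, |g s - c|) + ∫ s in p..b, |g s - c| := by
        gcongr
        exacts [habs haq, habs hqp, habs hpb]
    _ = ∫ s in a..b, |g s - c| := by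
        rw [integral_add_adjacent_intervals ((hgc a q).abs) ((hgc q p).abs),
          integral_add_adjacent_intervals ((hgc a p).abs) ((hgc p b).abs)]

lemma abs_integral_sub_two_mul_integral_middle_le_meanOscillation
    (hg : ∀ a b, IntervalIntegrable g volume a b) (hab : a < b) :
    |(∫ s in a..b, g s) - 2 * ∫ s in (a + (b - a) / 4)..(b - (b - a) / 4), g s|
      ≤ (b - a) * meanOscillation g a b :=
  (abs_integral_sub_two_mul_integral_middle_le hg _ hab.le).trans
    (integral_abs_sub_average_eq hab).le

lemma abs_integral_sub_two_mul_integral_middle_le_mul_abs {B : ℝ}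
    (hg : ∀ a b, IntervalIntegrable g volume a b)
    (hB : ∀ a b, a < b → meanOscillation g a b ≤ B) (a b : ℝ) :
    |(∫ s in a..b, g s) - 2 * ∫ s in (a + (b - a) / 4)..(b - (b - a) / 4), g s|
      ≤ B * |b - a| := by
  rcases lt_trichotomy a b with hab | rfl | hba
  · rw [abs_of_pos (sub_pos.mpr hab), mul_comm B]
    exact (abs_integral_sub_two_mul_integral_middle_le_meanOscillation hg hab).trans
      (mul_le_mul_of_nonneg_left (hB a b hab) (sub_pos.mpr hab).le)
  · simp
  · have h := abs_integral_sub_two_mul_integral_middle_le_meanOscillation hg hba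
    rw [show b + (a - b) / 4 = b - (b - a) / 4 by ring,
      show a - (a - b) / 4 = a + (b - a) / 4 by ring] at h
    have hflip : (∫ s in a..b, g s) - 2 * ∫ s in (a + (b - a) / 4)..(b - (b - a) / 4), g s
        = -((∫ s in b..a, g s) - 2 * ∫ s in (b - (b - a) / 4)..(a + (b - a) / 4), g s) := by
      rw [integral_symm b a, integral_symm (b - (b - a) / 4)]
      ring
    rw [hflip, abs_neg, abs_sub_comm b a, abs_of_pos (sub_pos.mpr hba), mul_comm B]
    exact h.trans (mul_le_mul_of_nonneg_left (hB b a hba) (sub_pos.mpr hba).le)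

end MiddleHalf

lemma abs_pow_div_pow_succ_le {N h B : ℝ} (n : ℕ) (hh : h ≠ 0) (hN : |N| ≤ B * |h|) :
    |N ^ n / h ^ (n + 1)| ≤ B ^ n / |h| := by
  have hh' : 0 < |h| := abs_pos.mpr hh
  rw [abs_div, abs_pow, abs_pow]
  calc |N| ^ n / |h| ^ (n + 1) ≤ (B * |h|) ^ n / |h| ^ (n + 1) := by gcongr
    _ = B ^ n / |h| := by rw [mul_pow, pow_succ]; field_simp

/-- If `A` is absolutely continuous with derivative `A' = g ∈ L^∞ ∩ BMO` (BMO seminorm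
at most `B`), then for `x ≠ t`, the kernel
`K_n(x,t) = (A(x)-A(t)-2A(x-¼(x-t))+2A(x-¾(x-t)))^n/(x-t)^{n+1}` satisfies
`|K_n(x,t)| ≤ C 2^n B^n |x-t|⁻¹` for an absolute constant `C`. -/
theorem stmt13 :
    ∃ C : ℝ, 0 < C ∧
      ∀ (A g : ℝ → ℝ) (B : ℝ) (n : ℕ), 1 ≤ n →
        (∀ a b : ℝ, IntervalIntegrable g MeasureTheory.volume a b) →
        (∀ a b : ℝ, A b - A a = ∫ s in a..b, g s) →
        (∀ a b : ℝ, a < b →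
          (b - a)⁻¹ * ∫ s in a..b, |g s - (b - a)⁻¹ * ∫ z in a..b, g z| ≤ B) →
        ∀ x t : ℝ, x ≠ t →
          |(A x - A t - 2 * A (x - (x - t) / 4) + 2 * A (x - 3 * (x - t) / 4)) ^ n
              / (x - t) ^ (n + 1)|
            ≤ C * 2 ^ n * B ^ n / |x - t| := by
  refine ⟨1, one_pos, fun A g B n _ hg hA hB x t hxt => ?_⟩
  have hB0 : 0 ≤ B := (meanOscillation_nonneg zero_le_one).trans (hB 0 1 one_pos)
  have hnum : A x - A t - 2 * A (x - (x - t) / 4) + 2 * A (x - 3 * (x - t) / 4)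
      = (∫ s in t..x, g s) - 2 * ∫ s in (t + (x - t) / 4)..(x - (x - t) / 4), g s := by
    rw [← hA, ← hA, show t + (x - t) / 4 = x - 3 * (x - t) / 4 by ring]
    ring
  have hnum_le : |A x - A t - 2 * A (x - (x - t) / 4) + 2 * A (x - 3 * (x - t) / 4)|
      ≤ B * |x - t| := by
    rw [hnum]
    exact abs_integral_sub_two_mul_integral_middle_le_mul_abs hg hB t x
  have hkernel := abs_pow_div_pow_succ_le n (sub_ne_zero.mpr hxt) hnum_le
  refine hkernel.trans (div_le_div_of_nonneg_right ?_ (abs_nonneg _))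
  rw [one_mul]
  exact le_mul_of_one_le_left (pow_nonneg hB0 n) (one_le_pow₀ one_le_two)
end
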